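/- arXiv:2512.12789 — 4 statements merged into one kernel-verified Lean document; each statement's English description precedes it below -/
import Mathlib

section
/- Let g : (0,∞) → ℝ be continuously differentiable, let G be an antiderivative of g and h an antiderivative of e^G. Suppose that the three functions e^{-G(u)} h(u), e^{-G(u)}, and u are linearly dependent over ℝ on (0,∞) (i.e., some nontrivial linear combination vanishes identically). Then there exists a constant a such that g(u) = a/u for all u > 0. -/
theorem dependence_forces_g (g G h : ℝ → ℝ)
    (hg : ∀ u : ℝ, 0 < u → DifferentiableAt ℝ g u)
    (hg' : ContinuousOn (deriv g) (Set.Ioi 0))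
    (hG : ∀ u : ℝ, 0 < u → HasDerivAt G (g u) u)
    (hh : ∀ u : ℝ, 0 < u → HasDerivAt h (Real.exp (G u)) u)
    (hdep : ∃ c₁ c₂ c₃ : ℝ, ¬(c₁ = 0 ∧ c₂ = 0 ∧ c₃ = 0) ∧
      ∀ u : ℝ, 0 < u →
        c₁ * (Real.exp (-G u) * h u) + c₂ * Real.exp (-G u) + c₃ * u = 0) :
    ∃ a : ℝ, ∀ u : ℝ, 0 < u → g u = a / u := by
  obtain ⟨c₁, c₂, c₃, hne, hrel⟩ := hdep
  -- Key: differentiating the relation gives g u * c₃ * u + c₁ + c₃ = 0 for all u > 0.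
  have key : ∀ u : ℝ, 0 < u → g u * c₃ * u + c₁ + c₃ = 0 := by
    intro u hu
    have hE : HasDerivAt (fun x => Real.exp (-G x)) (Real.exp (-G u) * (-g u)) u :=
      ((hG u hu).neg).exp
    have hF : HasDerivAt
        (fun x => c₁ * (Real.exp (-G x) * h x) + c₂ * Real.exp (-G x) + c₃ * x)
        (c₁ * (Real.exp (-G u) * (-g u) * h u + Real.exp (-G u) * Real.exp (G u))
          + c₂ * (Real.exp (-G u) * (-g u)) + c₃ * 1) u := by
      exact (((hE.mul (hh u hu)).const_mul c₁).add (hE.const_mul c₂)).add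
        ((hasDerivAt_id u).const_mul c₃)
    have hF0 : HasDerivAt
        (fun x => c₁ * (Real.exp (-G x) * h x) + c₂ * Real.exp (-G x) + c₃ * x) 0 u := by
      refine (hasDerivAt_const u 0).congr_of_eventuallyEq ?_
      filter_upwards [Ioi_mem_nhds hu] with x hx
      exact hrel x hx
    have hderiv := hF.unique hF0
    have hexp : Real.exp (-G u) * Real.exp (G u) = 1 := by
      rw [← Real.exp_add]; simp
    have hr := hrel u hu
    linear_combination hderiv + g u * hr - c₁ * hexp
  -- Case on c₃
  by_cases hc3 : c₃ = 0
  · exfalso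
    have h1 := key 1 one_pos
    rw [hc3] at h1
    have hc1 : c₁ = 0 := by linarith
    have hc2 : c₂ ≠ 0 := fun hc2 => hne ⟨hc1, hc2, hc3⟩
    have := hrel 1 one_pos
    rw [hc1, hc3] at this
    simp at this
    exact hc2 this
  · refine ⟨-(c₁ + c₃) / c₃, fun u hu => ?_⟩
    have := key u hu
    field_simp
    nlinarith [this]
end

section
/- Let u : ℝ² → ℝ be smooth and satisfy the sinh-Gordon equation ∂²u/∂x∂y = e^u - e^{-u}. Define K = u_xxx - (1/2) u_x³ (all derivatives with respect to x). Then ∂²K/∂x∂y = (e^u + e^{-u}) · K identically. -/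
noncomputable def pD (v : ℝ × ℝ) (F : ℝ × ℝ → ℝ) : ℝ × ℝ → ℝ := fun p => fderiv ℝ F p v

lemma pD_smooth {F : ℝ × ℝ → ℝ} (hF : ContDiff ℝ (⊤ : ℕ∞) F) (v : ℝ × ℝ) :
    ContDiff ℝ (⊤ : ℕ∞) (pD v F) := by
  have h1 : ContDiff ℝ (⊤ : ℕ∞) (fderiv ℝ F) := hF.fderiv_right (by simp)
  exact (ContinuousLinearMap.apply ℝ ℝ v).contDiff.comp h1

lemma pD_comm {F : ℝ × ℝ → ℝ} (hF : ContDiff ℝ (⊤ : ℕ∞) F) (v w : ℝ × ℝ) (p : ℝ × ℝ) :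
    pD v (pD w F) p = pD w (pD v F) p := by
  have hsym : IsSymmSndFDerivAt ℝ F p :=
    (hF.contDiffAt).isSymmSndFDerivAt (by rw [minSmoothness_of_isRCLikeNormedField]; exact WithTop.coe_le_coe.mpr (le_top : (2 : ℕ∞) ≤ ⊤))
  have hdiff : DifferentiableAt ℝ (fderiv ℝ F) p :=
    ((hF.fderiv_right (m := (⊤ : ℕ∞)) (by simp)).differentiable (by simp)) p
  have key : ∀ a b : ℝ × ℝ, pD a (pD b F) p = fderiv ℝ (fderiv ℝ F) p a b := by
    intro a b
    have h := ((ContinuousLinearMap.apply ℝ ℝ b).hasFDerivAt.comp p hdiff.hasFDerivAt).fderiv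
    show fderiv ℝ (fun q => fderiv ℝ F q b) p a = _
    rw [show (fun q => fderiv ℝ F q b) = (ContinuousLinearMap.apply ℝ ℝ b) ∘ (fderiv ℝ F) from rfl, h]
    rfl
  rw [key, key, hsym]

lemma pD_slice1 {F : ℝ × ℝ → ℝ} (hF : ContDiff ℝ (⊤ : ℕ∞) F) (x y : ℝ) :
    deriv (fun x' => F (x', y)) x = pD (1, 0) F (x, y) := by
  have h1 : HasFDerivAt F (fderiv ℝ F (x, y)) (x, y) :=
    ((hF.differentiable (by simp)) (x, y)).hasFDerivAt
  have h2 : HasDerivAt (fun x' : ℝ => ((x', y) : ℝ × ℝ)) ((1 : ℝ), (0 : ℝ)) x :=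
    HasDerivAt.prodMk (hasDerivAt_id x) (hasDerivAt_const x y)
  exact (h1.comp_hasDerivAt x h2).deriv

lemma pD_slice2 {F : ℝ × ℝ → ℝ} (hF : ContDiff ℝ (⊤ : ℕ∞) F) (x y : ℝ) :
    deriv (fun y' => F (x, y')) y = pD (0, 1) F (x, y) := by
  have h1 : HasFDerivAt F (fderiv ℝ F (x, y)) (x, y) :=
    ((hF.differentiable (by simp)) (x, y)).hasFDerivAt
  have h2 : HasDerivAt (fun y' : ℝ => ((x, y') : ℝ × ℝ)) ((0 : ℝ), (1 : ℝ)) y :=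
    HasDerivAt.prodMk (hasDerivAt_const y x) (hasDerivAt_id y)
  exact (h1.comp_hasDerivAt y h2).deriv

lemma pD_add {f g : ℝ × ℝ → ℝ} (hf : ContDiff ℝ (⊤ : ℕ∞) f) (hg : ContDiff ℝ (⊤ : ℕ∞) g)
    (v p) : pD v (fun q => f q + g q) p = pD v f p + pD v g p := by
  simp only [pD]
  rw [fderiv_fun_add ((hf.differentiable (by simp)) p) ((hg.differentiable (by simp)) p)]
  rfl

lemma pD_sub {f g : ℝ × ℝ → ℝ} (hf : ContDiff ℝ (⊤ : ℕ∞) f) (hg : ContDiff ℝ (⊤ : ℕ∞) g)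
    (v p) : pD v (fun q => f q - g q) p = pD v f p - pD v g p := by
  simp only [pD]
  rw [fderiv_fun_sub ((hf.differentiable (by simp)) p) ((hg.differentiable (by simp)) p)]
  rfl

lemma pD_mul {f g : ℝ × ℝ → ℝ} (hf : ContDiff ℝ (⊤ : ℕ∞) f) (hg : ContDiff ℝ (⊤ : ℕ∞) g)
    (v p) : pD v (fun q => f q * g q) p = pD v f p * g p + f p * pD v g p := by
  simp only [pD]
  rw [fderiv_fun_mul ((hf.differentiable (by simp)) p) ((hg.differentiable (by simp)) p)]
  simp only [ContinuousLinearMap.add_apply, ContinuousLinearMap.smul_apply, smul_eq_mul]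
  ring

lemma pD_const_mul {f : ℝ × ℝ → ℝ} (hf : ContDiff ℝ (⊤ : ℕ∞) f) (c : ℝ)
    (v p) : pD v (fun q => c * f q) p = c * pD v f p := by
  simp only [pD]
  rw [fderiv_const_mul ((hf.differentiable (by simp)) p) c]
  rfl

lemma pD_neg (f : ℝ × ℝ → ℝ) (v p) : pD v (fun q => -f q) p = -pD v f p := by
  simp only [pD, fderiv_fun_neg]
  rfl

lemma pD_exp {f : ℝ × ℝ → ℝ} (hf : ContDiff ℝ (⊤ : ℕ∞) f) (v p) :
    pD v (fun q => Real.exp (f q)) p = Real.exp (f p) * pD v f p := by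
  simp only [pD]
  rw [fderiv_exp ((hf.differentiable (by simp)) p)]
  rfl

lemma pD_pow2 {f : ℝ × ℝ → ℝ} (hf : ContDiff ℝ (⊤ : ℕ∞) f) (v p) :
    pD v (fun q => f q ^ 2) p = 2 * f p * pD v f p := by
  have h : (fun q => f q ^ 2) = fun q => f q * f q := by funext q; ring
  rw [h, pD_mul hf hf]
  ring

lemma pD_pow3 {f : ℝ × ℝ → ℝ} (hf : ContDiff ℝ (⊤ : ℕ∞) f) (v p) :
    pD v (fun q => f q ^ 3) p = 3 * f p ^ 2 * pD v f p := by
  have h : (fun q => f q ^ 3) = fun q => f q * f q * f q := by funext q; ring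
  rw [h, pD_mul (hf.mul hf) hf, pD_mul hf hf]
  ring

lemma sinh_aux {F : ℝ × ℝ → ℝ} (hF : ContDiff ℝ (⊤ : ℕ∞) F)
    (h2 : ∀ p, pD (0, 1) (pD (1, 0) F) p = Real.exp (F p) - Real.exp (-F p)) (p : ℝ × ℝ) :
    pD (0, 1) (pD (1, 0) (fun q =>
        pD (1, 0) (pD (1, 0) (pD (1, 0) F)) q - 1 / 2 * (pD (1, 0) F q) ^ 3)) p
      = (Real.exp (F p) + Real.exp (-F p)) *
        (pD (1, 0) (pD (1, 0) (pD (1, 0) F)) p - 1 / 2 * (pD (1, 0) F p) ^ 3) := by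
  have hA : ContDiff ℝ (⊤ : ℕ∞) (pD (1, 0) F) := pD_smooth hF _
  have hB : ContDiff ℝ (⊤ : ℕ∞) (pD (1, 0) (pD (1, 0) F)) := pD_smooth hA _
  have hC : ContDiff ℝ (⊤ : ℕ∞) (pD (1, 0) (pD (1, 0) (pD (1, 0) F))) := pD_smooth hB _
  have hE : ContDiff ℝ (⊤ : ℕ∞) (fun q => Real.exp (F q)) := Real.contDiff_exp.comp hF
  have hE' : ContDiff ℝ (⊤ : ℕ∞) (fun q => Real.exp (-F q)) := Real.contDiff_exp.comp hF.neg
  have dE : ∀ q, pD (1, 0) (fun q => Real.exp (F q)) q = Real.exp (F q) * pD (1, 0) F q :=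
    fun q => pD_exp hF _ q
  have dE' : ∀ q, pD (1, 0) (fun q => Real.exp (-F q)) q
      = -(Real.exp (-F q) * pD (1, 0) F q) := by
    intro q
    rw [pD_exp hF.neg (1, 0) q, pD_neg]
    ring
  have d2B : ∀ q, pD (0, 1) (pD (1, 0) (pD (1, 0) F)) q
      = (Real.exp (F q) + Real.exp (-F q)) * pD (1, 0) F q := by
    intro q
    rw [pD_comm hA (0, 1) (1, 0) q, funext h2, pD_sub hE hE' (1, 0) q, dE q, dE' q]
    ring
  have d2C : ∀ q, pD (0, 1) (pD (1, 0) (pD (1, 0) (pD (1, 0) F))) q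
      = (Real.exp (F q) - Real.exp (-F q)) * pD (1, 0) F q ^ 2
        + (Real.exp (F q) + Real.exp (-F q)) * pD (1, 0) (pD (1, 0) F) q := by
    intro q
    rw [pD_comm hB (0, 1) (1, 0) q, funext d2B, pD_mul (hE.add hE') hA (1, 0) q,
      pD_add hE hE' (1, 0) q, dE q, dE' q]
    ring
  have d2D : ∀ q, pD (0, 1) (pD (1, 0) (pD (1, 0) (pD (1, 0) (pD (1, 0) F)))) q
      = (Real.exp (F q) + Real.exp (-F q)) * pD (1, 0) F q ^ 3
        + 3 * (Real.exp (F q) - Real.exp (-F q)) * pD (1, 0) F q * pD (1, 0) (pD (1, 0) F) q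
        + (Real.exp (F q) + Real.exp (-F q)) * pD (1, 0) (pD (1, 0) (pD (1, 0) F)) q := by
    intro q
    rw [pD_comm hC (0, 1) (1, 0) q, funext d2C,
      pD_add ((hE.sub hE').mul (hA.pow 2)) ((hE.add hE').mul hB) (1, 0) q,
      pD_mul (hE.sub hE') (hA.pow 2) (1, 0) q,
      pD_mul (hE.add hE') hB (1, 0) q,
      pD_sub hE hE' (1, 0) q, pD_add hE hE' (1, 0) q,
      pD_pow2 hA (1, 0) q, dE q, dE' q]
    ring
  have step1 : ∀ q, pD (1, 0) (fun q =>
        pD (1, 0) (pD (1, 0) (pD (1, 0) F)) q - 1 / 2 * (pD (1, 0) F q) ^ 3) q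
      = pD (1, 0) (pD (1, 0) (pD (1, 0) (pD (1, 0) F))) q
        - 3 / 2 * (pD (1, 0) F q ^ 2 * pD (1, 0) (pD (1, 0) F) q) := by
    intro q
    rw [pD_sub hC (contDiff_const.mul (hA.pow 3)) (1, 0) q,
      pD_const_mul (hA.pow 3) (1 / 2) (1, 0) q, pD_pow3 hA (1, 0) q]
    ring
  rw [funext step1,
    pD_sub (pD_smooth hC _) (contDiff_const.mul ((hA.pow 2).mul hB)) (0, 1) p,
    pD_const_mul ((hA.pow 2).mul hB) (3 / 2) (0, 1) p,
    pD_mul (hA.pow 2) hB (0, 1) p,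
    pD_pow2 hA (0, 1) p,
    h2 p, d2B p, d2D p]
  ring

theorem sinhGordon_symmetry (u : ℝ → ℝ → ℝ)
    (hu : ContDiff ℝ (⊤ : ℕ∞) (fun p : ℝ × ℝ => u p.1 p.2))
    (heq : ∀ x y : ℝ,
      deriv (fun y' => deriv (fun x' => u x' y') x) y
        = Real.exp (u x y) - Real.exp (-u x y)) :
    let K : ℝ → ℝ → ℝ := fun x y =>
      iteratedDeriv 3 (fun x' => u x' y) x
        - (1 / 2) * (deriv (fun x' => u x' y) x) ^ 3
    ∀ x y : ℝ,
      deriv (fun y' => deriv (fun x' => K x' y') x) y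
        = (Real.exp (u x y) + Real.exp (-u x y)) * K x y := by
  intro K x y
  set F : ℝ × ℝ → ℝ := fun p => u p.1 p.2 with hFdef
  have hF : ContDiff ℝ (⊤ : ℕ∞) F := hu
  have hA : ContDiff ℝ (⊤ : ℕ∞) (pD (1, 0) F) := pD_smooth hF _
  have hB : ContDiff ℝ (⊤ : ℕ∞) (pD (1, 0) (pD (1, 0) F)) := pD_smooth hA _
  have hC : ContDiff ℝ (⊤ : ℕ∞) (pD (1, 0) (pD (1, 0) (pD (1, 0) F))) := pD_smooth hB _
  -- translate the sinh-Gordon equation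
  have h2 : ∀ p : ℝ × ℝ, pD (0, 1) (pD (1, 0) F) p = Real.exp (F p) - Real.exp (-F p) := by
    rintro ⟨a, b⟩
    have e1 : (fun y' => deriv (fun x' => u x' y') a) = fun y' => pD (1, 0) F (a, y') := by
      funext y'
      exact pD_slice1 hF a y'
    have h := heq a b
    rw [e1, pD_slice2 hA a b] at h
    exact h
  -- K in terms of pD
  have hK : ∀ a b : ℝ, K a b
      = pD (1, 0) (pD (1, 0) (pD (1, 0) F)) (a, b) - 1 / 2 * (pD (1, 0) F (a, b)) ^ 3 := by
    intro a b
    show iteratedDeriv 3 (fun x' => u x' b) a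
        - 1 / 2 * (deriv (fun x' => u x' b) a) ^ 3 = _
    have d1 : (deriv fun x' => u x' b) = fun a => pD (1, 0) F (a, b) :=
      funext fun a => pD_slice1 hF a b
    have d2 : (deriv fun a => pD (1, 0) F (a, b)) = fun a => pD (1, 0) (pD (1, 0) F) (a, b) :=
      funext fun a => pD_slice1 hA a b
    have d3 : (deriv fun a => pD (1, 0) (pD (1, 0) F) (a, b))
        = fun a => pD (1, 0) (pD (1, 0) (pD (1, 0) F)) (a, b) :=
      funext fun a => pD_slice1 hB a b
    rw [iteratedDeriv_succ, iteratedDeriv_succ, iteratedDeriv_succ, iteratedDeriv_zero,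
      d1, d2, d3]
  have g1 : (fun y' => deriv (fun x' => K x' y') x)
      = fun y' => pD (1, 0) (fun q =>
          pD (1, 0) (pD (1, 0) (pD (1, 0) F)) q - 1 / 2 * (pD (1, 0) F q) ^ 3) (x, y') := by
    funext y'
    have : (fun x' => K x' y') = fun x' =>
        (fun q : ℝ × ℝ => pD (1, 0) (pD (1, 0) (pD (1, 0) F)) q
          - 1 / 2 * (pD (1, 0) F q) ^ 3) (x', y') := by
      funext x'
      exact hK x' y'
    rw [this]
    exact pD_slice1 (hC.sub (contDiff_const.mul (hA.pow 3))) x y'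
  rw [g1, pD_slice2 (pD_smooth (hC.sub (contDiff_const.mul (hA.pow 3))) _) x y, hK x y]
  exact sinh_aux hF h2 (x, y)
end

section
/- Let u : ℝ² → ℝ be smooth and satisfy the Tzitzeica equation ∂²u/∂x∂y = e^u + e^{-2u}. Define K = u_xxxxx + 5(u_xx - u_x²) u_xxx - 5 u_x u_xx² + u_x⁵ (all derivatives with respect to x). Then ∂²K/∂x∂y = (e^u - 2 e^{-2u}) · K identically. -/
noncomputable def pdx (g : ℝ × ℝ → ℝ) : ℝ × ℝ → ℝ :=
  fun p => deriv (fun x' => g (x', p.2)) p.1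

noncomputable def pdy (g : ℝ × ℝ → ℝ) : ℝ × ℝ → ℝ :=
  fun p => deriv (fun y' => g (p.1, y')) p.2

lemma hasDerivAt_fst (g : ℝ × ℝ → ℝ) (hg : ContDiff ℝ (⊤ : ℕ∞) g) (x y : ℝ) :
    HasDerivAt (fun x' => g (x', y)) (fderiv ℝ g (x, y) (1, 0)) x := by
  have h := (hg.differentiable (by simp) (x, y)).hasFDerivAt
  have hline : HasDerivAt (fun x' : ℝ => ((x' : ℝ), y)) ((1 : ℝ), (0 : ℝ)) x :=
    (hasDerivAt_id x).prodMk (hasDerivAt_const x y)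
  exact h.comp_hasDerivAt x hline

lemma hasDerivAt_snd (g : ℝ × ℝ → ℝ) (hg : ContDiff ℝ (⊤ : ℕ∞) g) (x y : ℝ) :
    HasDerivAt (fun y' => g (x, y')) (fderiv ℝ g (x, y) (0, 1)) y := by
  have h := (hg.differentiable (by simp) (x, y)).hasFDerivAt
  have hline : HasDerivAt (fun y' : ℝ => ((x : ℝ), y')) ((0 : ℝ), (1 : ℝ)) y :=
    (hasDerivAt_const y x).prodMk (hasDerivAt_id y)
  exact h.comp_hasDerivAt y hline

lemma pdx_eq (g : ℝ × ℝ → ℝ) (hg : ContDiff ℝ (⊤ : ℕ∞) g) (x y : ℝ) :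
    pdx g (x, y) = fderiv ℝ g (x, y) (1, 0) :=
  (hasDerivAt_fst g hg x y).deriv

lemma pdy_eq (g : ℝ × ℝ → ℝ) (hg : ContDiff ℝ (⊤ : ℕ∞) g) (x y : ℝ) :
    pdy g (x, y) = fderiv ℝ g (x, y) (0, 1) :=
  (hasDerivAt_snd g hg x y).deriv

lemma hasDerivAt_pdx (g : ℝ × ℝ → ℝ) (hg : ContDiff ℝ (⊤ : ℕ∞) g) (x y : ℝ) :
    HasDerivAt (fun x' => g (x', y)) (pdx g (x, y)) x := by
  rw [pdx_eq g hg x y]; exact hasDerivAt_fst g hg x y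

lemma hasDerivAt_pdy (g : ℝ × ℝ → ℝ) (hg : ContDiff ℝ (⊤ : ℕ∞) g) (x y : ℝ) :
    HasDerivAt (fun y' => g (x, y')) (pdy g (x, y)) y := by
  rw [pdy_eq g hg x y]; exact hasDerivAt_snd g hg x y

lemma pdx_contDiff (g : ℝ × ℝ → ℝ) (hg : ContDiff ℝ (⊤ : ℕ∞) g) :
    ContDiff ℝ (⊤ : ℕ∞) (pdx g) := by
  have h : pdx g = fun p => fderiv ℝ g p (1, 0) := by
    funext p
    exact pdx_eq g hg p.1 p.2
  rw [h]
  exact (ContinuousLinearMap.apply ℝ ℝ ((1 : ℝ), (0 : ℝ))).contDiff.comp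
    (hg.fderiv_right (by simp))

lemma clairaut (g : ℝ × ℝ → ℝ) (hg : ContDiff ℝ (⊤ : ℕ∞) g) (x y : ℝ) :
    HasDerivAt (fun y' => pdx g (x, y')) (pdx (pdy g) (x, y)) y := by
  have hΦ : ContDiff ℝ (⊤ : ℕ∞) (fderiv ℝ g) := hg.fderiv_right (by simp)
  have h1 : HasDerivAt (fun y' => fderiv ℝ g (x, y'))
      (fderiv ℝ (fderiv ℝ g) (x, y) (0, 1)) y :=
    (hΦ.differentiable (by simp) (x, y)).hasFDerivAt.comp_hasDerivAt y
      (HasDerivAt.prodMk (hasDerivAt_const y x) (hasDerivAt_id y))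
  have h2 : HasDerivAt (fun y' => fderiv ℝ g (x, y') ((1 : ℝ), (0 : ℝ)))
      (fderiv ℝ (fderiv ℝ g) (x, y) (0, 1) (1, 0)) y := by
    have := h1.clm_apply (hasDerivAt_const y ((1 : ℝ), (0 : ℝ)))
    simpa using this
  have hsym : fderiv ℝ (fderiv ℝ g) (x, y) (0, 1) ((1 : ℝ), (0 : ℝ))
      = fderiv ℝ (fderiv ℝ g) (x, y) (1, 0) ((0 : ℝ), (1 : ℝ)) :=
    hg.contDiffAt.isSymmSndFDerivAt
      (by rw [minSmoothness_of_isRCLikeNormedField]; exact WithTop.coe_le_coe.mpr le_top) _ _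
  have hfun : (fun y' => pdx g (x, y')) = fun y' => fderiv ℝ g (x, y') ((1 : ℝ), (0 : ℝ)) :=
    funext fun y' => pdx_eq g hg x y'
  have hval : pdx (pdy g) (x, y) = fderiv ℝ (fderiv ℝ g) (x, y) (1, 0) ((0 : ℝ), (1 : ℝ)) := by
    have h4 : HasDerivAt (fun x' => fderiv ℝ g (x', y))
        (fderiv ℝ (fderiv ℝ g) (x, y) (1, 0)) x :=
      (hΦ.differentiable (by simp) (x, y)).hasFDerivAt.comp_hasDerivAt x
        ((hasDerivAt_id x).prodMk (hasDerivAt_const x y))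
    have h3 : HasDerivAt (fun x' => fderiv ℝ g (x', y) ((0 : ℝ), (1 : ℝ)))
        (fderiv ℝ (fderiv ℝ g) (x, y) (1, 0) (0, 1)) x := by
      have := h4.clm_apply (hasDerivAt_const x ((0 : ℝ), (1 : ℝ)))
      simpa using this
    calc pdx (pdy g) (x, y) = deriv (fun x' => pdy g (x', y)) x := rfl
      _ = deriv (fun x' => fderiv ℝ g (x', y) ((0 : ℝ), (1 : ℝ))) x := by
          congr 1
          funext x'
          exact pdy_eq g hg x' y
      _ = _ := h3.deriv
  rw [hfun, hval, ← hsym]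
  exact h2

theorem tzitzeica_symmetry (u : ℝ → ℝ → ℝ)
    (hu : ContDiff ℝ (⊤ : ℕ∞) (fun p : ℝ × ℝ => u p.1 p.2))
    (heq : ∀ x y : ℝ,
      deriv (fun y' => deriv (fun x' => u x' y') x) y
        = Real.exp (u x y) + Real.exp (-2 * u x y)) :
    let K : ℝ → ℝ → ℝ := fun x y =>
      iteratedDeriv 5 (fun x' => u x' y) x
        + 5 * (iteratedDeriv 2 (fun x' => u x' y) x
            - (deriv (fun x' => u x' y) x) ^ 2) * iteratedDeriv 3 (fun x' => u x' y) x
        - 5 * deriv (fun x' => u x' y) x * (iteratedDeriv 2 (fun x' => u x' y) x) ^ 2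
        + (deriv (fun x' => u x' y) x) ^ 5
    ∀ x y : ℝ,
      deriv (fun y' => deriv (fun x' => K x' y') x) y
        = (Real.exp (u x y) - 2 * Real.exp (-2 * u x y)) * K x y := by
  intro K x y
  have hK : ∀ a b : ℝ, K a b =
      iteratedDeriv 5 (fun x' => u x' b) a
        + 5 * (iteratedDeriv 2 (fun x' => u x' b) a
            - (deriv (fun x' => u x' b) a) ^ 2) * iteratedDeriv 3 (fun x' => u x' b) a
        - 5 * deriv (fun x' => u x' b) a * (iteratedDeriv 2 (fun x' => u x' b) a) ^ 2
        + (deriv (fun x' => u x' b) a) ^ 5 := fun a b => rfl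
  set F : ℝ × ℝ → ℝ := fun p => u p.1 p.2 with hF
  set V1 : ℝ × ℝ → ℝ := pdx F with hV1
  set V2 : ℝ × ℝ → ℝ := pdx V1 with hV2
  set V3 : ℝ × ℝ → ℝ := pdx V2 with hV3
  set V4 : ℝ × ℝ → ℝ := pdx V3 with hV4
  set V5 : ℝ × ℝ → ℝ := pdx V4 with hV5
  have h1 : ContDiff ℝ (⊤ : ℕ∞) V1 := pdx_contDiff F hu
  have h2 : ContDiff ℝ (⊤ : ℕ∞) V2 := pdx_contDiff V1 h1
  have h3 : ContDiff ℝ (⊤ : ℕ∞) V3 := pdx_contDiff V2 h2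
  have h4 : ContDiff ℝ (⊤ : ℕ∞) V4 := pdx_contDiff V3 h3
  have h5 : ContDiff ℝ (⊤ : ℕ∞) V5 := pdx_contDiff V4 h4
  -- HasDerivAt in the x-direction
  have hx0 : ∀ a b : ℝ, HasDerivAt (fun t => u t b) (V1 (a, b)) a :=
    fun a b => hasDerivAt_pdx F hu a b
  have hx1 : ∀ a b : ℝ, HasDerivAt (fun t => V1 (t, b)) (V2 (a, b)) a :=
    fun a b => hasDerivAt_pdx V1 h1 a b
  have hx2 : ∀ a b : ℝ, HasDerivAt (fun t => V2 (t, b)) (V3 (a, b)) a :=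
    fun a b => hasDerivAt_pdx V2 h2 a b
  have hx3 : ∀ a b : ℝ, HasDerivAt (fun t => V3 (t, b)) (V4 (a, b)) a :=
    fun a b => hasDerivAt_pdx V3 h3 a b
  have hx4 : ∀ a b : ℝ, HasDerivAt (fun t => V4 (t, b)) (V5 (a, b)) a :=
    fun a b => hasDerivAt_pdx V4 h4 a b
  have hexp1 : ∀ a b : ℝ, HasDerivAt (fun t => Real.exp (u t b))
      (Real.exp (u a b) * V1 (a, b)) a := fun a b => (hx0 a b).exp
  have hexp2 : ∀ a b : ℝ, HasDerivAt (fun t => Real.exp (-2 * u t b))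
      (Real.exp (-2 * u a b) * (-2 * V1 (a, b))) a :=
    fun a b => ((hx0 a b).const_mul (-2)).exp
  -- HasDerivAt in the y-direction
  have hW1 : ∀ a b : ℝ, HasDerivAt (fun s => V1 (a, s))
      (Real.exp (u a b) + Real.exp (-2 * u a b)) b := by
    intro a b
    have h := hasDerivAt_pdy V1 h1 a b
    have hv : pdy V1 (a, b) = Real.exp (u a b) + Real.exp (-2 * u a b) := heq a b
    rwa [hv] at h
  have hW2 : ∀ a b : ℝ, HasDerivAt (fun s => V2 (a, s))
      (V1 (a, b) * Real.exp (u a b) + (-2 * V1 (a, b)) * Real.exp (-2 * u a b)) b := by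
    intro a b
    have hcl := clairaut V1 h1 a b
    have hpdy : pdy V1 = fun p : ℝ × ℝ =>
        Real.exp (u p.1 p.2) + Real.exp (-2 * u p.1 p.2) :=
      funext fun p => (hW1 p.1 p.2).deriv
    rw [hpdy] at hcl
    have hd : HasDerivAt (fun t => Real.exp (u t b) + Real.exp (-2 * u t b))
        (V1 (a, b) * Real.exp (u a b) + (-2 * V1 (a, b)) * Real.exp (-2 * u a b)) a := by
      have hbase := (hexp1 a b).add (hexp2 a b)
      refine hbase.congr_deriv ?_
      ring
    have hval : pdx (fun p : ℝ × ℝ =>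
        Real.exp (u p.1 p.2) + Real.exp (-2 * u p.1 p.2)) (a, b)
        = V1 (a, b) * Real.exp (u a b) + (-2 * V1 (a, b)) * Real.exp (-2 * u a b) := hd.deriv
    rw [hval] at hcl
    exact hcl
  have hW3 : ∀ a b : ℝ, HasDerivAt (fun s => V3 (a, s))
      ((V2 (a, b) + V1 (a, b) ^ 2) * Real.exp (u a b)
        + (-2 * V2 (a, b) + 4 * V1 (a, b) ^ 2) * Real.exp (-2 * u a b)) b := by
    intro a b
    have hcl := clairaut V2 h2 a b
    have hpdy : pdy V2 = fun p : ℝ × ℝ =>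
        V1 p * Real.exp (u p.1 p.2) + (-2 * V1 p) * Real.exp (-2 * u p.1 p.2) :=
      funext fun p => (hW2 p.1 p.2).deriv
    rw [hpdy] at hcl
    have hd : HasDerivAt (fun t =>
        V1 (t, b) * Real.exp (u t b) + (-2 * V1 (t, b)) * Real.exp (-2 * u t b))
        ((V2 (a, b) + V1 (a, b) ^ 2) * Real.exp (u a b)
          + (-2 * V2 (a, b) + 4 * V1 (a, b) ^ 2) * Real.exp (-2 * u a b)) a := by
      have hbase := ((hx1 a b).mul (hexp1 a b)).add
        (((hx1 a b).const_mul (-2)).mul (hexp2 a b))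
      refine hbase.congr_deriv ?_
      ring
    have hval : pdx (fun p : ℝ × ℝ =>
        V1 p * Real.exp (u p.1 p.2) + (-2 * V1 p) * Real.exp (-2 * u p.1 p.2)) (a, b)
        = (V2 (a, b) + V1 (a, b) ^ 2) * Real.exp (u a b)
          + (-2 * V2 (a, b) + 4 * V1 (a, b) ^ 2) * Real.exp (-2 * u a b) := hd.deriv
    rw [hval] at hcl
    exact hcl
  have hW4 : ∀ a b : ℝ, HasDerivAt (fun s => V4 (a, s))
      ((V3 (a, b) + 3 * (V1 (a, b) * V2 (a, b)) + V1 (a, b) ^ 3) * Real.exp (u a b)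
        + (-2 * V3 (a, b) + 12 * (V1 (a, b) * V2 (a, b)) + -8 * V1 (a, b) ^ 3)
          * Real.exp (-2 * u a b)) b := by
    intro a b
    have hcl := clairaut V3 h3 a b
    have hpdy : pdy V3 = fun p : ℝ × ℝ =>
        (V2 p + V1 p ^ 2) * Real.exp (u p.1 p.2)
          + (-2 * V2 p + 4 * V1 p ^ 2) * Real.exp (-2 * u p.1 p.2) :=
      funext fun p => (hW3 p.1 p.2).deriv
    rw [hpdy] at hcl
    have hd : HasDerivAt (fun t =>
        (V2 (t, b) + V1 (t, b) ^ 2) * Real.exp (u t b)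
          + (-2 * V2 (t, b) + 4 * V1 (t, b) ^ 2) * Real.exp (-2 * u t b))
        ((V3 (a, b) + 3 * (V1 (a, b) * V2 (a, b)) + V1 (a, b) ^ 3) * Real.exp (u a b)
          + (-2 * V3 (a, b) + 12 * (V1 (a, b) * V2 (a, b)) + -8 * V1 (a, b) ^ 3)
            * Real.exp (-2 * u a b)) a := by
      have hbase := (((hx2 a b).add ((hx1 a b).fun_pow 2)).mul (hexp1 a b)).add
        ((((hx2 a b).const_mul (-2)).add (((hx1 a b).fun_pow 2).const_mul 4)).mul (hexp2 a b))
      refine hbase.congr_deriv ?_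
      simp only [Pi.add_apply, Pi.sub_apply, Pi.mul_apply, Pi.pow_apply]
      ring
    have hval : pdx (fun p : ℝ × ℝ =>
        (V2 p + V1 p ^ 2) * Real.exp (u p.1 p.2)
          + (-2 * V2 p + 4 * V1 p ^ 2) * Real.exp (-2 * u p.1 p.2)) (a, b)
        = (V3 (a, b) + 3 * (V1 (a, b) * V2 (a, b)) + V1 (a, b) ^ 3) * Real.exp (u a b)
          + (-2 * V3 (a, b) + 12 * (V1 (a, b) * V2 (a, b)) + -8 * V1 (a, b) ^ 3)
            * Real.exp (-2 * u a b) := hd.deriv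
    rw [hval] at hcl
    exact hcl
  have hW5 : ∀ a b : ℝ, HasDerivAt (fun s => V5 (a, s))
      ((V4 (a, b) + 4 * (V1 (a, b) * V3 (a, b)) + 3 * V2 (a, b) ^ 2
          + 6 * (V1 (a, b) ^ 2 * V2 (a, b)) + V1 (a, b) ^ 4) * Real.exp (u a b)
        + (-2 * V4 (a, b) + 16 * (V1 (a, b) * V3 (a, b)) + 12 * V2 (a, b) ^ 2
          + -48 * (V1 (a, b) ^ 2 * V2 (a, b)) + 16 * V1 (a, b) ^ 4)
          * Real.exp (-2 * u a b)) b := by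
    intro a b
    have hcl := clairaut V4 h4 a b
    have hpdy : pdy V4 = fun p : ℝ × ℝ =>
        (V3 p + 3 * (V1 p * V2 p) + V1 p ^ 3) * Real.exp (u p.1 p.2)
          + (-2 * V3 p + 12 * (V1 p * V2 p) + -8 * V1 p ^ 3) * Real.exp (-2 * u p.1 p.2) :=
      funext fun p => (hW4 p.1 p.2).deriv
    rw [hpdy] at hcl
    have hd : HasDerivAt (fun t =>
        (V3 (t, b) + 3 * (V1 (t, b) * V2 (t, b)) + V1 (t, b) ^ 3) * Real.exp (u t b)
          + (-2 * V3 (t, b) + 12 * (V1 (t, b) * V2 (t, b)) + -8 * V1 (t, b) ^ 3)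
            * Real.exp (-2 * u t b))
        ((V4 (a, b) + 4 * (V1 (a, b) * V3 (a, b)) + 3 * V2 (a, b) ^ 2
            + 6 * (V1 (a, b) ^ 2 * V2 (a, b)) + V1 (a, b) ^ 4) * Real.exp (u a b)
          + (-2 * V4 (a, b) + 16 * (V1 (a, b) * V3 (a, b)) + 12 * V2 (a, b) ^ 2
            + -48 * (V1 (a, b) ^ 2 * V2 (a, b)) + 16 * V1 (a, b) ^ 4)
            * Real.exp (-2 * u a b)) a := by
      have hbase := ((((hx3 a b).add (((hx1 a b).mul (hx2 a b)).const_mul 3)).add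
          ((hx1 a b).fun_pow 3)).mul (hexp1 a b)).add
        (((((hx3 a b).const_mul (-2)).add
            (((hx1 a b).mul (hx2 a b)).const_mul 12)).add
          (((hx1 a b).fun_pow 3).const_mul (-8))).mul (hexp2 a b))
      refine hbase.congr_deriv ?_
      simp only [Pi.add_apply, Pi.sub_apply, Pi.mul_apply, Pi.pow_apply]
      ring
    have hval : pdx (fun p : ℝ × ℝ =>
        (V3 p + 3 * (V1 p * V2 p) + V1 p ^ 3) * Real.exp (u p.1 p.2)
          + (-2 * V3 p + 12 * (V1 p * V2 p) + -8 * V1 p ^ 3)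
            * Real.exp (-2 * u p.1 p.2)) (a, b)
        = (V4 (a, b) + 4 * (V1 (a, b) * V3 (a, b)) + 3 * V2 (a, b) ^ 2
            + 6 * (V1 (a, b) ^ 2 * V2 (a, b)) + V1 (a, b) ^ 4) * Real.exp (u a b)
          + (-2 * V4 (a, b) + 16 * (V1 (a, b) * V3 (a, b)) + 12 * V2 (a, b) ^ 2
            + -48 * (V1 (a, b) ^ 2 * V2 (a, b)) + 16 * V1 (a, b) ^ 4)
            * Real.exp (-2 * u a b) := hd.deriv
    rw [hval] at hcl
    exact hcl
  -- the symmetry candidate as a function of p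
  have hCK : ContDiff ℝ (⊤ : ℕ∞) (fun p : ℝ × ℝ =>
      V5 p + (5 * (V2 p - V1 p ^ 2)) * V3 p + (-5) * (V1 p * V2 p ^ 2) + V1 p ^ 5) :=
    ((h5.add (((contDiff_const.mul (h2.sub (h1.pow 2)))).mul h3)).add
      (contDiff_const.mul (h1.mul (h2.pow 2)))).add (h1.pow 5)
  -- y-derivative of K
  have hWK : ∀ a b : ℝ, HasDerivAt (fun s =>
      V5 (a, s) + (5 * (V2 (a, s) - V1 (a, s) ^ 2)) * V3 (a, s)
        + (-5) * (V1 (a, s) * V2 (a, s) ^ 2) + V1 (a, s) ^ 5)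
      ((V4 (a, b) + 3 * V2 (a, b) ^ 2 + -1 * (V1 (a, b) * V3 (a, b))
          + -4 * (V1 (a, b) ^ 2 * V2 (a, b)) + V1 (a, b) ^ 4) * Real.exp (u a b)
        + (-2 * V4 (a, b) + -3 * V2 (a, b) ^ 2 + -4 * (V1 (a, b) * V3 (a, b))
          + 2 * (V1 (a, b) ^ 2 * V2 (a, b)) + V1 (a, b) ^ 4)
          * Real.exp (-2 * u a b)) b := by
    intro a b
    have hbase := (((hW5 a b).add
        ((((hW2 a b).sub ((hW1 a b).fun_pow 2)).const_mul 5).mul (hW3 a b))).add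
      (((hW1 a b).mul ((hW2 a b).fun_pow 2)).const_mul (-5))).add ((hW1 a b).fun_pow 5)
    refine hbase.congr_deriv ?_
    simp only [Pi.add_apply, Pi.sub_apply, Pi.mul_apply, Pi.pow_apply]
    ring
  have hclK := clairaut (fun p : ℝ × ℝ =>
      V5 p + (5 * (V2 p - V1 p ^ 2)) * V3 p + (-5) * (V1 p * V2 p ^ 2) + V1 p ^ 5) hCK x y
  have hpdyK : pdy (fun p : ℝ × ℝ =>
      V5 p + (5 * (V2 p - V1 p ^ 2)) * V3 p + (-5) * (V1 p * V2 p ^ 2) + V1 p ^ 5)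
      = fun p : ℝ × ℝ =>
      (V4 p + 3 * V2 p ^ 2 + -1 * (V1 p * V3 p) + -4 * (V1 p ^ 2 * V2 p) + V1 p ^ 4)
          * Real.exp (u p.1 p.2)
        + (-2 * V4 p + -3 * V2 p ^ 2 + -4 * (V1 p * V3 p) + 2 * (V1 p ^ 2 * V2 p)
          + V1 p ^ 4) * Real.exp (-2 * u p.1 p.2) :=
    funext fun p => (hWK p.1 p.2).deriv
  rw [hpdyK] at hclK
  have hdK : HasDerivAt (fun t =>
      (V4 (t, y) + 3 * V2 (t, y) ^ 2 + -1 * (V1 (t, y) * V3 (t, y))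
          + -4 * (V1 (t, y) ^ 2 * V2 (t, y)) + V1 (t, y) ^ 4) * Real.exp (u t y)
        + (-2 * V4 (t, y) + -3 * V2 (t, y) ^ 2 + -4 * (V1 (t, y) * V3 (t, y))
          + 2 * (V1 (t, y) ^ 2 * V2 (t, y)) + V1 (t, y) ^ 4) * Real.exp (-2 * u t y))
      ((Real.exp (u x y) - 2 * Real.exp (-2 * u x y))
        * (V5 (x, y) + (5 * (V2 (x, y) - V1 (x, y) ^ 2)) * V3 (x, y)
          + (-5) * (V1 (x, y) * V2 (x, y) ^ 2) + V1 (x, y) ^ 5)) x := by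
    have hP := ((((hx4 x y).add (((hx2 x y).fun_pow 2).const_mul 3)).add
        (((hx1 x y).mul (hx3 x y)).const_mul (-1))).add
        ((((hx1 x y).fun_pow 2).mul (hx2 x y)).const_mul (-4))).add ((hx1 x y).fun_pow 4)
    have hQ := (((((hx4 x y).const_mul (-2)).add
        (((hx2 x y).fun_pow 2).const_mul (-3))).add
        (((hx1 x y).mul (hx3 x y)).const_mul (-4))).add
        ((((hx1 x y).fun_pow 2).mul (hx2 x y)).const_mul 2)).add ((hx1 x y).fun_pow 4)
    have hbase := (hP.mul (hexp1 x y)).add (hQ.mul (hexp2 x y))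
    refine hbase.congr_deriv ?_
    simp only [Pi.add_apply, Pi.sub_apply, Pi.mul_apply, Pi.pow_apply]
    ring
  have hvalK : pdx (fun p : ℝ × ℝ =>
      (V4 p + 3 * V2 p ^ 2 + -1 * (V1 p * V3 p) + -4 * (V1 p ^ 2 * V2 p) + V1 p ^ 4)
          * Real.exp (u p.1 p.2)
        + (-2 * V4 p + -3 * V2 p ^ 2 + -4 * (V1 p * V3 p) + 2 * (V1 p ^ 2 * V2 p)
          + V1 p ^ 4) * Real.exp (-2 * u p.1 p.2)) (x, y)
      = (Real.exp (u x y) - 2 * Real.exp (-2 * u x y))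
        * (V5 (x, y) + (5 * (V2 (x, y) - V1 (x, y) ^ 2)) * V3 (x, y)
          + (-5) * (V1 (x, y) * V2 (x, y) ^ 2) + V1 (x, y) ^ 5) := hdK.deriv
  rw [hvalK] at hclK
  -- identify the statement's K with the explicit expression
  have e1 : ∀ b : ℝ, deriv (fun t => u t b) = fun t => V1 (t, b) := fun b => rfl
  have e2 : ∀ b : ℝ, iteratedDeriv 2 (fun t => u t b) = fun t => V2 (t, b) := by
    intro b
    rw [iteratedDeriv_succ, iteratedDeriv_one, e1 b]
    rfl
  have e3 : ∀ b : ℝ, iteratedDeriv 3 (fun t => u t b) = fun t => V3 (t, b) := by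
    intro b
    rw [iteratedDeriv_succ, e2 b]
    rfl
  have e4 : ∀ b : ℝ, iteratedDeriv 4 (fun t => u t b) = fun t => V4 (t, b) := by
    intro b
    rw [iteratedDeriv_succ, e3 b]
    rfl
  have e5 : ∀ b : ℝ, iteratedDeriv 5 (fun t => u t b) = fun t => V5 (t, b) := by
    intro b
    rw [iteratedDeriv_succ, e4 b]
    rfl
  have hKX : ∀ s : ℝ, (fun t => K t s) = fun t =>
      V5 (t, s) + (5 * (V2 (t, s) - V1 (t, s) ^ 2)) * V3 (t, s)
        + (-5) * (V1 (t, s) * V2 (t, s) ^ 2) + V1 (t, s) ^ 5 := by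
    intro s
    funext t
    rw [hK t s]
    simp only [e5 s, e2 s, e3 s, e1 s]
    ring
  have hinner : (fun y' => deriv (fun x' => K x' y') x)
      = fun y' => pdx (fun p : ℝ × ℝ =>
        V5 p + (5 * (V2 p - V1 p ^ 2)) * V3 p + (-5) * (V1 p * V2 p ^ 2) + V1 p ^ 5) (x, y') := by
    funext y'
    rw [hKX y']
    rfl
  rw [hinner, hclK.deriv, hK x y]
  simp only [e5 y, e2 y, e3 y, e1 y]
  ring
end

section
/- Let a ≠ 0 and let v : ℝ² → ℝ be smooth with v_x > 0 everywhere and satisfy v_xy = (a/3)(e^v - e^{-2v}). Define u_x^{new} := v_x², u_y^{new} := (a/3)(2 e^v + e^{-2v}), and f := (a/3)(e^v - e^{-2v}). Then: (i) the cross-derivative consistency holds, ∂_y(v_x²) = ∂_x((a/3)(2e^v + e^{-2v})); (ii) (f + u_y^{new})²(2 f - u_y^{new}) + a³ = 0 identically; and (iii) ∂_y (v_x²) = 2 f · √(v_x²). -/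
theorem S3_transformation (a : ℝ) (ha : a ≠ 0) (v : ℝ → ℝ → ℝ)
    (hv : ContDiff ℝ (⊤ : ℕ∞) (fun p : ℝ × ℝ => v p.1 p.2))
    (hvx : ∀ x y : ℝ, 0 < deriv (fun x' => v x' y) x)
    (heq : ∀ x y : ℝ,
      deriv (fun y' => deriv (fun x' => v x' y') x) y
        = (a / 3) * (Real.exp (v x y) - Real.exp (-2 * v x y))) :
    let P : ℝ → ℝ → ℝ := fun x y => (deriv (fun x' => v x' y) x) ^ 2
    let Q : ℝ → ℝ → ℝ := fun x y =>
      (a / 3) * (2 * Real.exp (v x y) + Real.exp (-2 * v x y))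
    let f : ℝ → ℝ → ℝ := fun x y =>
      (a / 3) * (Real.exp (v x y) - Real.exp (-2 * v x y))
    (∀ x y : ℝ, deriv (fun y' => P x y') y = deriv (fun x' => Q x' y) x) ∧
    (∀ x y : ℝ, (f x y + Q x y) ^ 2 * (2 * f x y - Q x y) + a ^ 3 = 0) ∧
    (∀ x y : ℝ, deriv (fun y' => P x y') y = 2 * f x y * Real.sqrt (P x y)) := by
  intro P Q f
  set F : ℝ × ℝ → ℝ := fun p => v p.1 p.2 with hF
  -- partial derivative in x equals fderiv applied to (1,0)
  have hA : ∀ x y : ℝ, deriv (fun x' => v x' y) x = fderiv ℝ F (x, y) (1, 0) := by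
    intro x y
    have h1 : HasFDerivAt (fun x' : ℝ => (x', y))
        ((ContinuousLinearMap.id ℝ ℝ).prod 0) x :=
      (hasFDerivAt_id x).prodMk (hasFDerivAt_const y x)
    have h2 := ((hv.differentiable (by simp) (x, y)).hasFDerivAt.comp x h1)
    have := h2.hasDerivAt.deriv
    simp at this; exact this
  -- smoothness of p ↦ fderiv F p (1,0)
  have hG : ContDiff ℝ (⊤ : ℕ∞) (fun p : ℝ × ℝ => fderiv ℝ F p (1, 0)) :=
    (hv.fderiv_right (by simp)).clm_apply contDiff_const
  -- differentiability of g : y ↦ v_x(x,y)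
  have hg : ∀ x : ℝ, Differentiable ℝ (fun y' => fderiv ℝ F (x, y') (1, 0)) := by
    intro x
    exact (hG.differentiable (by simp)).comp ((differentiable_const x).prodMk differentiable_id)
  -- derivative of P in y
  have hPy : ∀ x y : ℝ, deriv (fun y' => P x y') y
      = 2 * (deriv (fun x' => v x' y) x) * f x y := by
    intro x y
    have hfun : (fun y' => P x y') = fun y' => (fderiv ℝ F (x, y') (1, 0)) ^ 2 := by
      funext y'; simp only [P, hA]
    have hd : HasDerivAt (fun y' => fderiv ℝ F (x, y') (1, 0))
        (deriv (fun y' => fderiv ℝ F (x, y') (1, 0)) y) y :=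
      ((hg x).differentiableAt).hasDerivAt
    have hsq := hd.fun_pow 2
    rw [hfun, hsq.deriv]
    have hder : deriv (fun y' => fderiv ℝ F (x, y') (1, 0)) y = f x y := by
      have : (fun y' => fderiv ℝ F (x, y') (1, 0))
          = fun y' => deriv (fun x' => v x' y') x := by
        funext y'; rw [hA]
      rw [this, heq]
    rw [hder, hA]
    ring
  -- derivative of Q in x
  have hvxd : ∀ x y : ℝ, HasDerivAt (fun x' => v x' y)
      (deriv (fun x' => v x' y) x) x := by
    intro x y
    have : DifferentiableAt ℝ (fun x' => v x' y) x := by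
      have : (fun x' => v x' y) = F ∘ (fun x' : ℝ => (x', y)) := rfl
      rw [this]
      exact DifferentiableAt.comp x (hv.differentiable (by simp) (x, y))
        (differentiableAt_id.prodMk (differentiableAt_const y))
    exact this.hasDerivAt
  have hQx : ∀ x y : ℝ, deriv (fun x' => Q x' y) x
      = 2 * (deriv (fun x' => v x' y) x) * f x y := by
    intro x y
    have hd := hvxd x y
    have h1 : HasDerivAt (fun x' => Real.exp (v x' y))
        (Real.exp (v x y) * deriv (fun x' => v x' y) x) x := hd.exp
    have h2 : HasDerivAt (fun x' => Real.exp (-2 * v x' y))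
        (Real.exp (-2 * v x y) * (-2 * deriv (fun x' => v x' y) x)) x := by
      have := ((hd.const_mul (-2 : ℝ)).exp)
      simpa [mul_comm] using this
    have h3 : HasDerivAt (fun x' => Q x' y)
        ((a / 3) * (2 * (Real.exp (v x y) * deriv (fun x' => v x' y) x)
          + Real.exp (-2 * v x y) * (-2 * deriv (fun x' => v x' y) x))) x := by
      have := ((h1.const_mul (2 : ℝ)).add h2).const_mul (a / 3)
      simpa [Q, mul_add] using this
    rw [h3.deriv]
    simp only [f]
    ring
  refine ⟨fun x y => ?_, fun x y => ?_, fun x y => ?_⟩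
  · rw [hPy, hQx]
  · have hmul : Real.exp (v x y) ^ 2 * Real.exp (-2 * v x y) = 1 := by
      rw [sq, ← Real.exp_add, ← Real.exp_add]
      norm_num
      ring
    simp only [f, Q]
    linear_combination (-(a ^ 3)) * hmul
  · rw [hPy]
    have hx := hvx x y
    simp only [P]
    rw [Real.sqrt_sq hx.le]
    ring
end
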